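/- arXiv:0908.3316 — 2 statements merged into one kernel-verified Lean document; each statement's English description precedes it below -/
import Mathlib

section
/- Let a, b ≥ 1 ≥ c ≥ 0 with b > 1 if c = 0, and define R(x) = ((ab−c)x+c)/((ab−a−c)x+a+c), T(x) = x/(x+a) on [0,1]. Then the orbit of any x ∈ (0,1] under the semigroup generated by R and T is dense in [0,1]. -/
/-!
Write `R` and `T` as the Möbius maps `x ↦ (p x + q) / (r x + s)` of the matrices
`!![a * b - c, c; a * b - a - c, a + c]` and `!![1, 0; 1, a]`, so that a word acts through the
product of its matrices.

If `c > 0`, the images of `[0, 1]` under the words of length `n` cover `[0, 1]`, because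
`R 0 = c / (a + c) ≤ 1 / (1 + a) = T 1`. The image under a word with matrix `M` is an interval of
length `det M / (d₀ d₁)`, where `d₀` and `d₁` are the denominators at `0` and `1`. After `n` letters
the ratio `d₀ / d₁` lies in `[κ / (n + 1), n + 1]` with `κ = c / (a b)`, so the next letter shrinks
the length by a factor at most `1 / (1 + κ / (n + 1))`. Hence all these intervals have length at
most `1 / (1 + κ H_n) → 0`, and `w x` is close to every point `w s` of the same interval.

If `c = 0`, every word fixes `0`, and in the coordinate `y = 1 / x - 1` the maps become `y ↦ y / b`
and `y ↦ a (y + 1)`. A target `τ` is pulled back greedily, by `y ↦ b y` when `y < a` and by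
`y ↦ y / a - 1` otherwise, giving words `w` and points `y` with `w y = τ`. The quantity
`slope w * (y + 1)` never increases and drops by the factor `1 - (b - 1) / (b (a + 1))` at every
`R`-step, and `R`-steps recur because each `T`-step lowers `y` by at least `1`. So
`w Y = τ + slope w * (Y - y)` tends to `τ` for every `Y ≥ 0`.
-/

open Filter Set

section Words

variable {α β : Type*}

def wordOrbit (F : Bool → α → α) (x : α) : Set α :=
  {y | ∃ w : List Bool, w ≠ [] ∧ y = w.foldr F x}

lemma foldr_mem_of_mapsTo {F : Bool → α → α} {S : Set α} (hF : ∀ s, MapsTo (F s) S S)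
    (w : List Bool) {x : α} (hx : x ∈ S) : w.foldr F x ∈ S := by
  induction w with
  | nil => exact hx
  | cons s w ih => exact hF s ih

lemma foldr_semiconj {F : Bool → α → α} {G : Bool → β → β} {φ : β → α} {S : Set β}
    (hG : ∀ s, MapsTo (G s) S S) (hφ : ∀ s, ∀ y ∈ S, F s (φ y) = φ (G s y))
    (w : List Bool) {y : β} (hy : y ∈ S) : w.foldr F (φ y) = φ (w.foldr G y) := by
  induction w with
  | nil => rfl
  | cons s w ih =>
    rw [List.foldr_cons, List.foldr_cons, ih, hφ s _ (foldr_mem_of_mapsTo hG w hy)]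

lemma exists_length_eq_foldr_eq {F : Bool → α → α} {S : Set α} (hS : S ⊆ ⋃ s, F s '' S)
    (n : ℕ) {t : α} (ht : t ∈ S) :
    ∃ w : List Bool, w.length = n ∧ ∃ x ∈ S, w.foldr F x = t := by
  induction n with
  | zero => exact ⟨[], rfl, t, ht, rfl⟩
  | succ n ih =>
    obtain ⟨w, rfl, x, hx, rfl⟩ := ih
    obtain ⟨s, x', hx', rfl⟩ := mem_iUnion.1 (hS hx)
    exact ⟨w ++ [s], by simp, x', hx', by simp⟩

end Words

lemma cast_harmonic_nonneg (n : ℕ) : (0 : ℝ) ≤ harmonic n := by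
  unfold harmonic; positivity

lemma tendsto_harmonic_atTop : Tendsto (fun n ↦ (harmonic n : ℝ)) atTop atTop :=
  tendsto_atTop_mono log_add_one_le_harmonic
    (Real.tendsto_log_atTop.comp (tendsto_natCast_atTop_atTop.comp (tendsto_add_atTop_nat 1)))

lemma abs_one_div_one_add_sub_le {u v : ℝ} (hu : 0 ≤ u) (hv : 0 ≤ v) :
    |1 / (1 + u) - 1 / (1 + v)| ≤ |u - v| := by
  rw [div_sub_div _ _ (by positivity) (by positivity), abs_div,
    abs_of_pos (by positivity : (0 : ℝ) < (1 + u) * (1 + v)), div_le_iff₀ (by positivity),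
    show 1 * (1 + v) - (1 + u) * 1 = -(u - v) by ring, abs_neg]
  exact le_mul_of_one_le_right (abs_nonneg _) (by nlinarith)

lemma exists_one_div_one_add_eq {z : ℝ} (hz : z ∈ Ioc (0 : ℝ) 1) :
    ∃ y, 0 ≤ y ∧ 1 / (1 + y) = z :=
  ⟨1 / z - 1, by rw [sub_nonneg, one_le_div hz.1]; exact hz.2,
    by rw [add_sub_cancel, one_div_one_div]⟩

section Moebius

variable {M N : Matrix (Fin 2) (Fin 2) ℝ} {x y : ℝ}

def moebiusDen (M : Matrix (Fin 2) (Fin 2) ℝ) (x : ℝ) : ℝ := M 1 0 * x + M 1 1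

noncomputable def moebiusMap (M : Matrix (Fin 2) (Fin 2) ℝ) (x : ℝ) : ℝ :=
  (M 0 0 * x + M 0 1) / moebiusDen M x

lemma moebiusMap_mul (hN : moebiusDen N x ≠ 0) :
    moebiusMap (M * N) x = moebiusMap M (moebiusMap N x) := by
  simp only [moebiusMap, moebiusDen, Matrix.mul_apply, Fin.sum_univ_two] at hN ⊢
  rw [mul_div_assoc', mul_div_assoc', div_add' _ _ _ hN, div_add' _ _ _ hN,
    div_div_div_cancel_right₀ hN]
  congr 1 <;> ring

lemma moebiusDen_pos (h₀ : 0 < moebiusDen M 0) (h₁ : 0 < moebiusDen M 1)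
    (hx : x ∈ Icc (0 : ℝ) 1) : 0 < moebiusDen M x := by
  have hconvex : moebiusDen M x = (1 - x) * moebiusDen M 0 + x * moebiusDen M 1 := by
    simp only [moebiusDen]; ring
  rcases eq_or_lt_of_le hx.2 with rfl | hx₁
  · exact h₁
  · rw [hconvex]; nlinarith [hx.1]

lemma moebiusMap_mem_Icc (h₀ : 0 < moebiusDen M 0) (h₁ : 0 < moebiusDen M 1)
    (hdet : 0 ≤ M.det) (hx : x ∈ Icc (0 : ℝ) 1) :
    moebiusMap M x ∈ Icc (moebiusMap M 0) (moebiusMap M 1) := by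
  have hd := moebiusDen_pos h₀ h₁ hx
  rw [Matrix.det_fin_two] at hdet
  constructor
  · rw [moebiusMap, moebiusMap, div_le_div_iff₀ h₀ hd]
    simp only [moebiusDen]
    nlinarith [hx.1]
  · rw [moebiusMap, moebiusMap, div_le_div_iff₀ hd h₁]
    simp only [moebiusDen]
    nlinarith [hx.2]

lemma moebiusMap_one_sub_moebiusMap_zero (h₀ : 0 < moebiusDen M 0) (h₁ : 0 < moebiusDen M 1) :
    moebiusMap M 1 - moebiusMap M 0 = M.det / (moebiusDen M 0 * moebiusDen M 1) := by
  simp only [moebiusDen, mul_zero, zero_add, mul_one] at h₀ h₁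
  simp only [moebiusMap, moebiusDen, Matrix.det_fin_two, mul_zero, zero_add, mul_one]
  field_simp
  ring

lemma abs_moebiusMap_sub_le_det_div (h₀ : 0 < moebiusDen M 0) (h₁ : 0 < moebiusDen M 1)
    (hdet : 0 ≤ M.det) (hx : x ∈ Icc (0 : ℝ) 1) (hy : y ∈ Icc (0 : ℝ) 1) :
    |moebiusMap M x - moebiusMap M y| ≤ M.det / (moebiusDen M 0 * moebiusDen M 1) := by
  obtain ⟨hx₀, hx₁⟩ := moebiusMap_mem_Icc h₀ h₁ hdet hx
  obtain ⟨hy₀, hy₁⟩ := moebiusMap_mem_Icc h₀ h₁ hdet hy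
  rw [← moebiusMap_one_sub_moebiusMap_zero h₀ h₁, abs_sub_le_iff]
  constructor <;> linarith

lemma continuousOn_moebiusMap (h₀ : 0 < moebiusDen M 0) (h₁ : 0 < moebiusDen M 1) :
    ContinuousOn (moebiusMap M) (Icc 0 1) :=
  ContinuousOn.div (by fun_prop) (by unfold moebiusDen; fun_prop)
    fun _ hx ↦ (moebiusDen_pos h₀ h₁ hx).ne'

end Moebius

section Generators

variable {a b c κ : ℝ} {n : ℕ} {M : Matrix (Fin 2) (Fin 2) ℝ}

def genMatrix (a b c : ℝ) : Bool → Matrix (Fin 2) (Fin 2) ℝ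
  | true => !![a * b - c, c; a * b - a - c, a + c]
  | false => !![1, 0; 1, a]

noncomputable def genMap (a b c : ℝ) (s : Bool) : ℝ → ℝ :=
  moebiusMap (genMatrix a b c s)

lemma genMap_true_apply (x : ℝ) :
    genMap a b c true x = ((a * b - c) * x + c) / ((a * b - a - c) * x + (a + c)) := by
  simp [genMap, moebiusMap, moebiusDen, genMatrix]

lemma genMap_false_apply (x : ℝ) : genMap a b c false x = x / (x + a) := by
  simp [genMap, moebiusMap, moebiusDen, genMatrix]

lemma moebiusDen_mul_genMatrix_true :
    moebiusDen (M * genMatrix a b c true) 0 = a * moebiusDen M 0 + c * moebiusDen M 1 ∧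
      moebiusDen (M * genMatrix a b c true) 1 = a * b * moebiusDen M 1 := by
  constructor <;> simp only [moebiusDen, genMatrix, Matrix.mul_apply, Fin.sum_univ_two,
    Matrix.of_apply, Matrix.cons_val', Matrix.cons_val_zero, Matrix.cons_val_one,
    Matrix.cons_val_fin_one] <;> ring

lemma moebiusDen_mul_genMatrix_false :
    moebiusDen (M * genMatrix a b c false) 0 = a * moebiusDen M 0 ∧
      moebiusDen (M * genMatrix a b c false) 1 = moebiusDen M 1 + a * moebiusDen M 0 := by
  constructor <;> simp only [moebiusDen, genMatrix, Matrix.mul_apply, Fin.sum_univ_two,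
    Matrix.of_apply, Matrix.cons_val', Matrix.cons_val_zero, Matrix.cons_val_one,
    Matrix.cons_val_fin_one] <;> ring

lemma det_genMatrix_true : (genMatrix a b c true).det = a ^ 2 * b := by
  simp only [genMatrix, Matrix.det_fin_two_of]; ring

lemma det_genMatrix_false : (genMatrix a b c false).det = a := by
  simp [genMatrix, Matrix.det_fin_two_of]

lemma one_add_mul_harmonic_succ_mul_le {D P e : ℝ}
    (h : (1 + κ * (harmonic n : ℝ)) * D ≤ P) (he : κ * D ≤ (n + 1) * e) :
    (1 + κ * (harmonic (n + 1) : ℝ)) * D ≤ P + e := by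
  have : κ * D * ((n : ℝ) + 1)⁻¹ ≤ e := by
    rw [← div_eq_mul_inv, div_le_iff₀ (by positivity)]; linarith
  push_cast [harmonic_succ]
  linarith

structure WidthBound (κ : ℝ) (n : ℕ) (M : Matrix (Fin 2) (Fin 2) ℝ) : Prop where
  den_zero_pos : 0 < moebiusDen M 0
  den_one_pos : 0 < moebiusDen M 1
  det_nonneg : 0 ≤ M.det
  den_one_le : κ * moebiusDen M 1 ≤ (n + 1) * moebiusDen M 0
  den_zero_le : moebiusDen M 0 ≤ (n + 1) * moebiusDen M 1
  det_le : (1 + κ * (harmonic n : ℝ)) * M.det ≤ moebiusDen M 0 * moebiusDen M 1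

lemma WidthBound.det_le_mul (h : WidthBound κ n M) (hκ : 0 ≤ κ) :
    M.det ≤ moebiusDen M 0 * moebiusDen M 1 := by
  have : 0 ≤ κ * (harmonic n : ℝ) := mul_nonneg hκ (cast_harmonic_nonneg n)
  nlinarith [h.det_le, h.det_nonneg]

lemma WidthBound.abs_moebiusMap_sub_le (h : WidthBound κ n M) (hκ : 0 ≤ κ) {x y : ℝ}
    (hx : x ∈ Icc (0 : ℝ) 1) (hy : y ∈ Icc (0 : ℝ) 1) :
    |moebiusMap M x - moebiusMap M y| ≤ 1 / (1 + κ * (harmonic n : ℝ)) := by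
  have hS : 0 < 1 + κ * (harmonic n : ℝ) := by have := cast_harmonic_nonneg n; positivity
  refine (abs_moebiusMap_sub_le_det_div h.den_zero_pos h.den_one_pos h.det_nonneg hx hy).trans ?_
  rw [div_le_div_iff₀ (mul_pos h.den_zero_pos h.den_one_pos) hS]
  linarith [h.det_le]

lemma widthBound_one (hκ : κ ≤ 1) : WidthBound κ 0 1 where
  den_zero_pos := by simp [moebiusDen]
  den_one_pos := by simp [moebiusDen]
  det_nonneg := by simp
  den_one_le := by simpa [moebiusDen] using hκ
  den_zero_le := by simp [moebiusDen]
  det_le := by simp [moebiusDen]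

lemma WidthBound.mul_genMatrix_false (h : WidthBound κ n M) (hκ₀ : 0 ≤ κ) (hκ₁ : κ ≤ 1)
    (ha : 1 ≤ a) : WidthBound κ (n + 1) (M * genMatrix a b c false) := by
  have hΔ' := h.det_le_mul hκ₀
  obtain ⟨hα, hβ, hΔ, h₁, h₂, h₃⟩ := h
  obtain ⟨e₀, e₁⟩ := moebiusDen_mul_genMatrix_false (M := M) (a := a) (b := b) (c := c)
  have hn : (0 : ℝ) ≤ n + 1 := by positivity
  constructor <;> simp only [e₀, e₁, Matrix.det_mul, det_genMatrix_false] <;> push_cast <;>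
    generalize moebiusDen M 0 = α at * <;> generalize moebiusDen M 1 = β at * <;>
    generalize M.det = Δ at *
  · positivity
  · positivity
  · positivity
  · nlinarith [mul_nonneg (mul_nonneg hn hα.le) (sub_nonneg.2 ha),
      mul_nonneg (sub_nonneg.2 hκ₁) (mul_nonneg (by linarith : (0 : ℝ) ≤ a) hα.le)]
  · nlinarith [mul_nonneg hn (mul_nonneg (by linarith : (0 : ℝ) ≤ a) hα.le)]
  · have hD : (1 + κ * (harmonic n : ℝ)) * (Δ * a) ≤ a * α * β := by nlinarith
    have he : κ * (Δ * a) ≤ (n + 1) * (a * α * (a * α)) := by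
      have : κ * Δ ≤ (n + 1) * α * α := by nlinarith [mul_le_mul_of_nonneg_left hΔ' hκ₀]
      nlinarith [mul_nonneg (mul_nonneg hn (mul_nonneg hα.le hα.le)) (sub_nonneg.2 ha)]
    linarith [one_add_mul_harmonic_succ_mul_le hD he]

lemma WidthBound.mul_genMatrix_true (h : WidthBound κ n M) (hκ₀ : 0 ≤ κ) (hκ : κ * (a * b) ≤ c)
    (ha : 1 ≤ a) (hb : 1 ≤ b) (hc₀ : 0 ≤ c) (hc₁ : c ≤ 1) :
    WidthBound κ (n + 1) (M * genMatrix a b c true) := by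
  have hΔ' := h.det_le_mul hκ₀
  obtain ⟨hα, hβ, hΔ, h₁, h₂, h₃⟩ := h
  obtain ⟨e₀, e₁⟩ := moebiusDen_mul_genMatrix_true (M := M) (a := a) (b := b) (c := c)
  have hn : (0 : ℝ) ≤ n + 1 := by positivity
  have hab : 1 ≤ a * b := by nlinarith
  constructor <;> simp only [e₀, e₁, Matrix.det_mul, det_genMatrix_true] <;> push_cast <;>
    generalize moebiusDen M 0 = α at * <;> generalize moebiusDen M 1 = β at * <;>
    generalize M.det = Δ at *
  · positivity
  · positivity
  · positivity
  · nlinarith [mul_le_mul_of_nonneg_right hκ hβ.le, mul_nonneg hn (mul_nonneg hc₀ hβ.le),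
      mul_nonneg (by linarith : (0 : ℝ) ≤ a) hα.le]
  · nlinarith [mul_le_mul_of_nonneg_left h₂ (by linarith : (0 : ℝ) ≤ a),
      mul_nonneg (mul_nonneg (by linarith : (0 : ℝ) ≤ a) (sub_nonneg.2 hb)) (mul_nonneg hn hβ.le),
      mul_nonneg (by linarith : (0 : ℝ) ≤ a * b - c) hβ.le]
  · have hD : (1 + κ * (harmonic n : ℝ)) * (Δ * (a ^ 2 * b)) ≤ a ^ 2 * b * (α * β) := by
      nlinarith [mul_le_mul_of_nonneg_left h₃ (by positivity : (0 : ℝ) ≤ a ^ 2 * b)]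
    have he : κ * (Δ * (a ^ 2 * b)) ≤ (n + 1) * (c * β * (a * b * β)) := by
      have h₄ : κ * (Δ * (a ^ 2 * b)) ≤ a * c * Δ := by
        nlinarith [mul_le_mul_of_nonneg_left hκ (by positivity : (0 : ℝ) ≤ a * Δ)]
      have h₅ : Δ ≤ (n + 1) * β * β := by nlinarith [mul_le_mul_of_nonneg_right h₂ hβ.le]
      nlinarith [mul_le_mul_of_nonneg_left h₅ (by positivity : (0 : ℝ) ≤ a * c),
        mul_nonneg (mul_nonneg (by positivity : (0 : ℝ) ≤ a * c) (sub_nonneg.2 hb))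
          (mul_nonneg hn (mul_nonneg hβ.le hβ.le))]
    linarith [one_add_mul_harmonic_succ_mul_le hD he]

end Generators

section Cylinders

variable {a b c κ x : ℝ}

def wordMatrix (a b c : ℝ) (w : List Bool) : Matrix (Fin 2) (Fin 2) ℝ :=
  (w.map (genMatrix a b c)).prod

lemma wordMatrix_cons (s : Bool) (w : List Bool) :
    wordMatrix a b c (s :: w) = genMatrix a b c s * wordMatrix a b c w := by
  simp [wordMatrix]

lemma wordMatrix_append_singleton (w : List Bool) (s : Bool) :
    wordMatrix a b c (w ++ [s]) = wordMatrix a b c w * genMatrix a b c s := by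
  simp [wordMatrix]

lemma widthBound_wordMatrix (hκ₀ : 0 ≤ κ) (hκ : κ * (a * b) ≤ c) (ha : 1 ≤ a) (hb : 1 ≤ b)
    (hc₀ : 0 ≤ c) (hc₁ : c ≤ 1) (w : List Bool) :
    WidthBound κ w.length (wordMatrix a b c w) := by
  have hκ₁ : κ ≤ 1 := by
    nlinarith [mul_le_mul_of_nonneg_left (one_le_mul_of_one_le_of_one_le ha hb) hκ₀]
  induction w using List.reverseRecOn with
  | nil => exact widthBound_one hκ₁
  | append_singleton w s ih =>
    rw [wordMatrix_append_singleton, List.length_append, List.length_singleton]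
    cases s
    · exact ih.mul_genMatrix_false hκ₀ hκ₁ ha
    · exact ih.mul_genMatrix_true hκ₀ hκ ha hb hc₀ hc₁

lemma moebiusDen_wordMatrix_pos (ha : 1 ≤ a) (hb : 1 ≤ b) (hc₀ : 0 ≤ c) (hc₁ : c ≤ 1)
    (w : List Bool) :
    0 < moebiusDen (wordMatrix a b c w) 0 ∧ 0 < moebiusDen (wordMatrix a b c w) 1 :=
  have h := widthBound_wordMatrix le_rfl (by simpa using hc₀) ha hb hc₀ hc₁ w
  ⟨h.den_zero_pos, h.den_one_pos⟩

lemma foldr_genMap_eq_moebiusMap (ha : 1 ≤ a) (hb : 1 ≤ b) (hc₀ : 0 ≤ c) (hc₁ : c ≤ 1)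
    (w : List Bool) (hx : x ∈ Icc (0 : ℝ) 1) :
    w.foldr (genMap a b c) x = moebiusMap (wordMatrix a b c w) x := by
  induction w with
  | nil => simp [wordMatrix, moebiusMap, moebiusDen]
  | cons s w ih =>
    obtain ⟨h₀, h₁⟩ := moebiusDen_wordMatrix_pos ha hb hc₀ hc₁ w
    rw [List.foldr_cons, ih, genMap, wordMatrix_cons, moebiusMap_mul (moebiusDen_pos h₀ h₁ hx).ne']

lemma Icc_subset_iUnion_genMap_image (ha : 1 ≤ a) (hb : 1 ≤ b) (hc₀ : 0 ≤ c) (hc₁ : c ≤ 1) :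
    Icc (0 : ℝ) 1 ⊆ ⋃ s, genMap a b c s '' Icc 0 1 := by
  have hcont (s : Bool) : ContinuousOn (genMap a b c s) (Icc 0 1) := by
    have h := moebiusDen_wordMatrix_pos ha hb hc₀ hc₁ [s]
    rw [wordMatrix, List.map_singleton, List.prod_singleton] at h
    exact continuousOn_moebiusMap h.1 h.2
  have hT : Icc (0 : ℝ) (1 / (1 + a)) ⊆ genMap a b c false '' Icc 0 1 := by
    have h₀ : genMap a b c false 0 = 0 := by simp [genMap_false_apply]
    have h₁ : genMap a b c false 1 = 1 / (1 + a) := by rw [genMap_false_apply, add_comm]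
    simpa only [h₀, h₁] using intermediate_value_Icc zero_le_one (hcont false)
  have hR : Icc (c / (a + c)) 1 ⊆ genMap a b c true '' Icc 0 1 := by
    have h₀ : genMap a b c true 0 = c / (a + c) := by simp [genMap_true_apply]
    have h₁ : genMap a b c true 1 = 1 := by
      rw [genMap_true_apply, div_eq_one_iff_eq] <;> [ring; nlinarith]
    simpa only [h₀, h₁] using intermediate_value_Icc zero_le_one (hcont true)
  have hRT : c / (a + c) ≤ 1 / (1 + a) := by
    rw [div_le_div_iff₀ (by linarith) (by linarith)]; nlinarith
  intro t ht
  rcases le_total t (1 / (1 + a)) with h | h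
  · exact mem_iUnion.2 ⟨false, hT ⟨ht.1, h⟩⟩
  · exact mem_iUnion.2 ⟨true, hR ⟨hRT.trans h, ht.2⟩⟩

lemma Icc_subset_closure_wordOrbit_genMap (ha : 1 ≤ a) (hb : 1 ≤ b) (hc₀ : 0 < c)
    (hc₁ : c ≤ 1) (hx : x ∈ Icc (0 : ℝ) 1) :
    Icc (0 : ℝ) 1 ⊆ closure (wordOrbit (genMap a b c) x) := by
  intro t ht
  rw [Metric.mem_closure_iff]
  intro ε hε
  set κ := c / (a * b)
  have hκ : 0 < κ := by positivity
  have hκab : κ * (a * b) ≤ c := (div_mul_cancel₀ c (by positivity)).le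
  obtain ⟨n, hε', hn⟩ : ∃ n : ℕ, 1 / ε < 1 + κ * (harmonic n : ℝ) ∧ 1 ≤ n :=
    ((tendsto_atTop_add_const_left _ 1
      (tendsto_harmonic_atTop.const_mul_atTop hκ)).eventually_gt_atTop _
      |>.and (eventually_ge_atTop 1)).exists
  obtain ⟨w, rfl, s, hs, rfl⟩ :=
    exists_length_eq_foldr_eq (Icc_subset_iUnion_genMap_image ha hb hc₀.le hc₁) n ht
  refine ⟨w.foldr (genMap a b c) x, ⟨w, List.ne_nil_of_length_pos hn, rfl⟩, ?_⟩
  rw [Real.dist_eq, foldr_genMap_eq_moebiusMap ha hb hc₀.le hc₁ w hs,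
    foldr_genMap_eq_moebiusMap ha hb hc₀.le hc₁ w hx]
  calc _ ≤ 1 / (1 + κ * (harmonic w.length : ℝ)) :=
        (widthBound_wordMatrix hκ.le hκab ha hb hc₀.le hc₁ w).abs_moebiusMap_sub_le hκ.le hs hx
    _ < ε := (one_div_lt ((one_div_pos.2 hε).trans hε') hε).2 hε'

end Cylinders

section Affine

variable {a b : ℝ}

noncomputable def affineGen (a b : ℝ) : Bool → ℝ → ℝ
  | true => fun y ↦ y / b
  | false => fun y ↦ a * (y + 1)

noncomputable def affineSlope (a b : ℝ) (w : List Bool) : ℝ :=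
  a ^ w.count false / b ^ w.count true

noncomputable def contractionRate (a b : ℝ) : ℝ := 1 - (b - 1) / (b * (a + 1))

lemma contractionRate_nonneg (ha : 0 ≤ a) (hb : 1 ≤ b) : 0 ≤ contractionRate a b :=
  sub_nonneg.2 ((div_le_one (by positivity)).2 (by nlinarith))

lemma contractionRate_lt_one (ha : 0 ≤ a) (hb : 1 < b) : contractionRate a b < 1 :=
  sub_lt_self _ (div_pos (by linarith) (by positivity))

lemma affineSlope_nonneg (ha : 0 ≤ a) (hb : 0 ≤ b) (w : List Bool) : 0 ≤ affineSlope a b w := by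
  unfold affineSlope; positivity

lemma affineSlope_append_false (w : List Bool) :
    affineSlope a b (w ++ [false]) = affineSlope a b w * a := by
  simp [affineSlope, List.count_append, pow_succ, mul_div_right_comm]

lemma affineSlope_append_true (w : List Bool) :
    affineSlope a b (w ++ [true]) = affineSlope a b w / b := by
  simp [affineSlope, List.count_append, pow_succ, div_div]

lemma mapsTo_affineGen (ha : 0 ≤ a) (hb : 0 ≤ b) (s : Bool) :
    MapsTo (affineGen a b s) (Ici 0) (Ici 0) := by
  intro y (hy : 0 ≤ y)
  cases s <;> simp only [affineGen, mem_Ici] <;> positivity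

lemma foldr_affineGen_sub (w : List Bool) (u v : ℝ) :
    w.foldr (affineGen a b) u - w.foldr (affineGen a b) v = affineSlope a b w * (u - v) := by
  induction w using List.reverseRecOn generalizing u v with
  | nil => simp [affineSlope]
  | append_singleton w s ih =>
    simp only [List.foldr_append, List.foldr_cons, List.foldr_nil, ih]
    cases s
    · rw [affineSlope_append_false, affineGen]; ring
    · rw [affineSlope_append_true, affineGen]; ring

lemma genMap_zero_one_div_one_add (ha : 0 < a) (hb : 0 < b) (s : Bool) {y : ℝ} (hy : 0 ≤ y) :
    genMap a b 0 s (1 / (1 + y)) = 1 / (1 + affineGen a b s y) := by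
  have : 0 < 1 + y := by linarith
  cases s
  · rw [genMap_false_apply, affineGen]
    field_simp
    ring
  · have hden : (a * b - a) * (1 + y)⁻¹ + a = a * (b + y) / (1 + y) := by field_simp; ring
    rw [genMap_true_apply, affineGen]
    simp only [sub_zero, add_zero, one_div]
    rw [hden]
    field_simp

lemma exists_pullback_lt (ha : 1 ≤ a) (hb : 0 ≤ b) (w : List Bool) {y : ℝ} (hy : 0 ≤ y) :
    ∃ w' y', 0 ≤ y' ∧ y' < a ∧ w'.foldr (affineGen a b) y' = w.foldr (affineGen a b) y ∧
      affineSlope a b w' * (y' + 1) ≤ affineSlope a b w * (y + 1) := by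
  obtain ⟨N, hN⟩ := exists_nat_gt y
  induction N generalizing w y with
  | zero => exact absurd hN (by push_cast; linarith)
  | succ N ih =>
    by_cases hya : y < a
    · exact ⟨w, y, hy, hya, rfl, le_rfl⟩
    replace hya := not_lt.1 hya
    have ha₀ : 0 < a := by linarith
    have hy' : 0 ≤ y / a - 1 := by rw [sub_nonneg, one_le_div ha₀]; exact hya
    have hyN : y / a - 1 < N := by
      have : y / a ≤ y := div_le_self hy ha
      push_cast at hN; linarith
    obtain ⟨w', y', h₀, h₁, h₂, h₃⟩ := ih (w ++ [false]) hy' hyN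
    refine ⟨w', y', h₀, h₁, ?_, h₃.trans ?_⟩
    · rw [h₂, List.foldr_append]
      simp [affineGen, mul_div_cancel₀ _ ha₀.ne']
    · have := affineSlope_nonneg ha₀.le hb w
      rw [affineSlope_append_false, sub_add_cancel, mul_assoc, mul_div_cancel₀ _ ha₀.ne']
      nlinarith

lemma exists_pullback_contract (ha : 1 ≤ a) (hb : 1 < b) (w : List Bool) {y : ℝ} (hy : 0 ≤ y) :
    ∃ w' y', w' ≠ [] ∧ 0 ≤ y' ∧ w'.foldr (affineGen a b) y' = w.foldr (affineGen a b) y ∧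
      affineSlope a b w' * (y' + 1) ≤ contractionRate a b * (affineSlope a b w * (y + 1)) := by
  obtain ⟨w', y', hy', hya, hw', hP⟩ := exists_pullback_lt (b := b) ha (by linarith) w hy
  refine ⟨w' ++ [true], b * y', by simp, by positivity, ?_, ?_⟩
  · rw [List.foldr_append, ← hw']
    simp [affineGen, mul_div_cancel_left₀ _ (by linarith : b ≠ 0)]
  have hs := affineSlope_nonneg (a := a) (b := b) (by linarith) (by linarith) w'
  have hθ : b * y' + 1 ≤ contractionRate a b * (b * (y' + 1)) := by
    have h₁ : (b - 1) / (b * (a + 1)) * (b * (y' + 1)) = (b - 1) * ((y' + 1) / (a + 1)) := by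
      field_simp
    have h₂ : (y' + 1) / (a + 1) ≤ 1 := (div_le_one (by positivity)).2 (by linarith)
    rw [contractionRate, sub_mul, one_mul, h₁]
    nlinarith
  calc affineSlope a b (w' ++ [true]) * (b * y' + 1)
      = affineSlope a b w' / b * (b * y' + 1) := by rw [affineSlope_append_true]
    _ ≤ affineSlope a b w' / b * (contractionRate a b * (b * (y' + 1))) := by gcongr
    _ = contractionRate a b * (affineSlope a b w' * (y' + 1)) := by field_simp
    _ ≤ _ := mul_le_mul_of_nonneg_left hP (contractionRate_nonneg (by linarith) hb.le)

lemma exists_pullback_small (ha : 1 ≤ a) (hb : 1 < b) {τ : ℝ} (hτ : 0 ≤ τ) (j : ℕ) :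
    ∃ w y, w ≠ [] ∧ 0 ≤ y ∧ w.foldr (affineGen a b) y = τ ∧
      affineSlope a b w * (y + 1) ≤ contractionRate a b ^ j * (τ + 1) := by
  have hθ₀ : 0 ≤ contractionRate a b := contractionRate_nonneg (by linarith) hb.le
  induction j with
  | zero =>
    obtain ⟨w, y, hw, hy, hwy, hP⟩ := exists_pullback_contract ha hb [] hτ
    refine ⟨w, y, hw, hy, hwy, hP.trans ?_⟩
    have hθ₁ : contractionRate a b < 1 := contractionRate_lt_one (by linarith) hb
    simp only [affineSlope, List.count_nil, pow_zero, div_one, one_mul]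
    nlinarith
  | succ j ih =>
    obtain ⟨w, y, -, hy, rfl, hP⟩ := ih
    obtain ⟨w', y', hw', hy', hwy', hP'⟩ := exists_pullback_contract ha hb w hy
    refine ⟨w', y', hw', hy', hwy', hP'.trans ?_⟩
    rw [pow_succ', mul_assoc]
    exact mul_le_mul_of_nonneg_left hP hθ₀

lemma Ioc_subset_closure_wordOrbit_genMap_zero (ha : 1 ≤ a) (hb : 1 < b) {x : ℝ}
    (hx : x ∈ Ioc (0 : ℝ) 1) : Ioc (0 : ℝ) 1 ⊆ closure (wordOrbit (genMap a b 0) x) := by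
  intro t ht
  rw [Metric.mem_closure_iff]
  intro ε hε
  obtain ⟨Y, hY, rfl⟩ := exists_one_div_one_add_eq hx
  obtain ⟨τ, hτ, rfl⟩ := exists_one_div_one_add_eq ht
  have hθ₀ : 0 ≤ contractionRate a b := contractionRate_nonneg (by linarith) hb.le
  obtain ⟨j, hj⟩ := exists_pow_lt_of_lt_one (by positivity : 0 < ε / ((τ + 1) * (Y + 1)))
    (contractionRate_lt_one (a := a) (by linarith) hb)
  obtain ⟨w, y, hw, hy, hwy, hP⟩ := exists_pullback_small ha hb hτ j
  refine ⟨_, ⟨w, hw, rfl⟩, ?_⟩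
  have hs := affineSlope_nonneg (a := a) (b := b) (by linarith) (by linarith) w
  have hmapsTo := mapsTo_affineGen (a := a) (b := b) (by linarith) (by linarith)
  rw [foldr_semiconj hmapsTo
      (fun s _ hy ↦ genMap_zero_one_div_one_add (by linarith) (by linarith) s hy) w hY,
    Real.dist_eq, ← hwy]
  calc _ ≤ |w.foldr (affineGen a b) y - w.foldr (affineGen a b) Y| :=
        abs_one_div_one_add_sub_le (foldr_mem_of_mapsTo hmapsTo w hy)
          (foldr_mem_of_mapsTo hmapsTo w hY)
    _ = affineSlope a b w * |y - Y| := by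
        rw [foldr_affineGen_sub, abs_mul, abs_of_nonneg hs]
    _ ≤ affineSlope a b w * (y + 1) * (Y + 1) := by
        rw [mul_assoc]; gcongr; rw [abs_le]; constructor <;> nlinarith
    _ ≤ contractionRate a b ^ j * (τ + 1) * (Y + 1) := by gcongr
    _ < ε := by rwa [lt_div_iff₀ (by positivity), ← mul_assoc] at hj

end Affine

/-- density of orbits for R(x) = ((ab−c)x+c)/((ab−a−c)x+a+c) and
T(x) = x/(x+a), with a, b ≥ 1 ≥ c ≥ 0 and b > 1 if c = 0. -/
theorem stmt_6 (a b c : ℝ) (ha : 1 ≤ a) (hb : 1 ≤ b) (hc1 : c ≤ 1) (hc0 : 0 ≤ c)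
    (hbc : c = 0 → 1 < b)
    (R T : ℝ → ℝ)
    (hR : ∀ x : ℝ, R x = ((a * b - c) * x + c) / ((a * b - a - c) * x + (a + c)))
    (hT : ∀ x : ℝ, T x = x / (x + a)) :
    ∀ x ∈ Set.Ioc (0:ℝ) 1, Set.Icc (0:ℝ) 1 ⊆
      closure {y | ∃ w : List Bool, w ≠ [] ∧
        y = w.foldr (fun s z => if s then R z else T z) x} := by
  have hRT : (fun s z ↦ if s then R z else T z) = genMap a b c := by
    funext s z
    cases s <;> simp [genMap_true_apply, genMap_false_apply, hR, hT]
  intro x hx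
  change Icc 0 1 ⊆ closure (wordOrbit (fun s z ↦ if s then R z else T z) x)
  rw [hRT]
  rcases hc0.eq_or_lt with rfl | hc
  · rw [← closure_Ioc zero_ne_one]
    exact closure_minimal (Ioc_subset_closure_wordOrbit_genMap_zero ha (hbc rfl) hx)
      isClosed_closure
  · exact Icc_subset_closure_wordOrbit_genMap ha hb hc hc1 (Ioc_subset_Icc_self hx)
end

section
/- Let g : [0,1] → [0,1] be a decreasing Möbius transformation that is onto. Then g is an involution: g(g(x)) = x for all x ∈ [0,1]. -/
/-!
An antitone map of `[0,1]` onto itself swaps the endpoints, and the only Möbius maps with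
`g 0 = 1` and `g 1 = 0` are `x ↦ D (1 - x) / (C x + D)`. Such a map is an involution: in
`g (g x)` both the numerator `D (1 - g x)` and the denominator `C g x + D` carry the common
factor `D (C + D) / (C x + D)`, leaving `x`.
-/

open Set

lemma AntitoneOn.apply_eq_of_image_Icc_eq {α β : Type*} [PartialOrder α] [PartialOrder β]
    {f : α → β} {a b : α} {c d : β} (hf : AntitoneOn f (Icc a b)) (hab : a ≤ b)
    (himg : f '' Icc a b = Icc c d) : f a = d ∧ f b = c := by
  have ha : f a ∈ Icc c d := himg ▸ mem_image_of_mem f (left_mem_Icc.2 hab)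
  have hb : f b ∈ Icc c d := himg ▸ mem_image_of_mem f (right_mem_Icc.2 hab)
  have hsub : Icc c d ⊆ Icc (f b) (f a) := himg ▸ hf.image_Icc_subset
  obtain ⟨hbc, hda⟩ := (Icc_subset_Icc_iff (ha.1.trans ha.2)).1 hsub
  exact ⟨le_antisymm ha.2 hda, le_antisymm hbc hb.1⟩

section Mobius

variable {K : Type*} [Field K]

def mobius (A B C D x : K) : K := (A * x + B) / (C * x + D)

lemma mobius_coeffs_of_zero_one {A B C D : K} (hD : D ≠ 0) (hCD : C + D ≠ 0)
    (h0 : mobius A B C D 0 = 1) (h1 : mobius A B C D 1 = 0) : A = -D ∧ B = D := by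
  simp only [mobius, mul_zero, zero_add, mul_one, div_eq_iff hD, div_eq_iff hCD] at h0 h1
  exact ⟨by linear_combination h1 - h0, by linear_combination h0⟩

lemma mobius_neg_mobius {C D x : K} (hD : D ≠ 0) (hCD : C + D ≠ 0) (hx : C * x + D ≠ 0) :
    mobius (-D) D C D (mobius (-D) D C D x) = x := by
  have hden : C * mobius (-D) D C D x + D = D * (C + D) / (C * x + D) := by
    rw [mobius, eq_div_iff hx, add_mul, mul_assoc, div_mul_cancel₀ _ hx]; ring
  have hnum : -D * mobius (-D) D C D x + D = D * (C + D) * x / (C * x + D) := by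
    rw [mobius, eq_div_iff hx, add_mul, mul_assoc, div_mul_cancel₀ _ hx]; ring
  rw [mobius, hden, hnum]
  field_simp

end Mobius

theorem stmt_14_general (g : ℝ → ℝ) (A B C D : ℝ)
    (hden : ∀ x ∈ Set.Icc (0:ℝ) 1, C * x + D ≠ 0)
    (hg : ∀ x ∈ Set.Icc (0:ℝ) 1, g x = (A * x + B) / (C * x + D))
    (hganti : StrictAntiOn g (Set.Icc 0 1))
    (hgonto : g '' Set.Icc 0 1 = Set.Icc 0 1) :
    ∀ x ∈ Set.Icc (0:ℝ) 1, g (g x) = x := by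
  have h0 : (0:ℝ) ∈ Icc (0:ℝ) 1 := left_mem_Icc.2 zero_le_one
  have h1 : (1:ℝ) ∈ Icc (0:ℝ) 1 := right_mem_Icc.2 zero_le_one
  have hD : D ≠ 0 := by simpa using hden 0 h0
  have hCD : C + D ≠ 0 := by simpa using hden 1 h1
  obtain ⟨hg0, hg1⟩ := hganti.antitoneOn.apply_eq_of_image_Icc_eq zero_le_one hgonto
  obtain ⟨rfl, rfl⟩ : A = -D ∧ B = D :=
    mobius_coeffs_of_zero_one hD hCD ((hg 0 h0).symm.trans hg0) ((hg 1 h1).symm.trans hg1)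
  intro x hx
  have hgx : g x ∈ Icc (0:ℝ) 1 := hgonto ▸ mem_image_of_mem g hx
  rw [hg _ hgx, hg x hx]
  exact mobius_neg_mobius hD hCD (hden x hx)

/-- a decreasing onto Möbius self-map of [0,1] is an involution. -/
theorem stmt_14 (g : ℝ → ℝ) (A B C D : ℝ) (hdet : A * D - B * C ≠ 0)
    (hden : ∀ x ∈ Set.Icc (0:ℝ) 1, C * x + D ≠ 0)
    (hg : ∀ x ∈ Set.Icc (0:ℝ) 1, g x = (A * x + B) / (C * x + D))
    (hganti : StrictAntiOn g (Set.Icc 0 1))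
    (hgonto : g '' Set.Icc 0 1 = Set.Icc 0 1) :
    ∀ x ∈ Set.Icc (0:ℝ) 1, g (g x) = x :=
  stmt_14_general g A B C D hden hg hganti hgonto
end
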